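/- Let α ∈ (0,1], let p, q, ν be real numbers with p ≠ 0, ν ≠ 0, q < 0, and let ε ∈ {1, −1}. Set a = ε √(−1/(4q)) and A = −12 ν q a / p. Then the function u(x,t) = A · sech²(a x − (ν/α) t^α) satisfies the conformable time fractional EW equation t^{1−α} ∂u/∂t + p u ∂u/∂x + q · t^{1−α} ∂/∂t(∂²u/∂x²) = 0 for all x ∈ ℝ and all t > 0. -/

import Mathlib

open Real

/-!
Along the phase `ξ = a x - (ν/α) t^α` the conformable derivative of `t^α / α` is `1`, so
`D_t^α` acts on functions of `ξ` as `-ν d/dξ` and the equation becomes the ODE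
`-ν g' + p a g g' - q ν a² g''' = 0` for the profile `g = A sech²`. Since `φ = sech²` satisfies
`φ'' = 4φ - 6φ²`, hence `φ''' = (4 - 12φ) φ'`, the left side is
`A φ' (-ν (1 + 4 q a²) + φ (p a A + 12 q ν a²))`, and both brackets vanish because
`4 q a² = -1` and `p a A = 3ν`.
-/

theorem deriv_comp_mul_sub (g : ℝ → ℝ) (a b x : ℝ) :
    deriv (fun y => g (a * y - b)) x = a * deriv g (a * x - b) :=
  (deriv_comp_mul_left a (fun z => g (z - b)) x).trans (by rw [deriv_comp_sub_const, smul_eq_mul])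

theorem deriv_deriv_comp_mul_sub (g : ℝ → ℝ) (a b x : ℝ) :
    deriv (deriv fun y => g (a * y - b)) x = a ^ 2 * deriv (deriv g) (a * x - b) := by
  simp only [funext (deriv_comp_mul_sub g a b), deriv_const_mul_field, deriv_comp_mul_sub]
  ring

theorem conformable_deriv_comp_sub_rpow (g : ℝ → ℝ) {α t : ℝ} (hα : α ≠ 0) (ht : 0 < t)
    (b ν : ℝ) (hg : DifferentiableAt ℝ g (b - ν / α * t ^ α)) :
    t ^ (1 - α) * deriv (fun τ => g (b - ν / α * τ ^ α)) t = -ν * deriv g (b - ν / α * t ^ α) := by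
  have hwave : HasDerivAt (fun τ => b - ν / α * τ ^ α) (-(ν / α * (α * t ^ (α - 1)))) t :=
    ((hasDerivAt_rpow_const (Or.inl ht.ne')).const_mul (ν / α)).const_sub b
  rw [HasDerivAt.deriv (f := fun τ => g (b - ν / α * τ ^ α)) (hg.hasDerivAt.comp t hwave)]
  have hpow : t ^ (1 - α) * t ^ (α - 1) = 1 := by
    rw [← rpow_add ht]; norm_num
  linear_combination (-deriv g (b - ν / α * t ^ α) * (ν / α * α)) * hpow
    - deriv g (b - ν / α * t ^ α) * div_mul_cancel₀ ν hα

theorem ew_travelingWave_eq (g : ℝ → ℝ) {α t : ℝ} (hα : α ≠ 0) (ht : 0 < t) (p q a ν x : ℝ)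
    (hg : DifferentiableAt ℝ g (a * x - ν / α * t ^ α))
    (hg₂ : DifferentiableAt ℝ (deriv (deriv g)) (a * x - ν / α * t ^ α)) :
    t ^ (1 - α) * deriv (fun τ => g (a * x - ν / α * τ ^ α)) t
      + p * g (a * x - ν / α * t ^ α) * deriv (fun y => g (a * y - ν / α * t ^ α)) x
      + q * t ^ (1 - α) * deriv (fun τ => deriv (deriv fun y => g (a * y - ν / α * τ ^ α)) x) t
    = -ν * deriv g (a * x - ν / α * t ^ α)
      + p * a * g (a * x - ν / α * t ^ α) * deriv g (a * x - ν / α * t ^ α)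
      - q * ν * a ^ 2 * deriv (deriv (deriv g)) (a * x - ν / α * t ^ α) := by
  simp only [deriv_deriv_comp_mul_sub, deriv_comp_mul_sub]
  rw [mul_assoc q, conformable_deriv_comp_sub_rpow g hα ht _ _ hg,
    conformable_deriv_comp_sub_rpow (fun ξ => a ^ 2 * deriv (deriv g) ξ) hα ht _ _
      (hg₂.const_mul _), deriv_const_mul_field]
  ring

theorem hasDerivAt_sech_sq (ξ : ℝ) :
    HasDerivAt (fun ξ => (1 / cosh ξ) ^ 2) (-2 * sinh ξ / cosh ξ ^ 3) ξ := by
  have hc : cosh ξ ≠ 0 := (cosh_pos ξ).ne'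
  simp only [one_div]
  refine (((hasDerivAt_cosh ξ).inv hc).pow 2).congr_deriv ?_
  norm_num
  field_simp

theorem differentiable_sech_sq : Differentiable ℝ fun ξ => (1 / cosh ξ) ^ 2 :=
  fun ξ => (hasDerivAt_sech_sq ξ).differentiableAt

theorem deriv_sech_sq : deriv (fun ξ => (1 / cosh ξ) ^ 2) = fun ξ => -2 * sinh ξ / cosh ξ ^ 3 :=
  funext fun ξ => (hasDerivAt_sech_sq ξ).deriv

theorem deriv_deriv_sech_sq :
    deriv (deriv fun ξ => (1 / cosh ξ) ^ 2) =
      fun ξ => 4 * (1 / cosh ξ) ^ 2 - 6 * ((1 / cosh ξ) ^ 2) ^ 2 := by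
  rw [deriv_sech_sq]
  funext ξ
  have hc : cosh ξ ≠ 0 := (cosh_pos ξ).ne'
  have h : HasDerivAt (fun ξ => -2 * sinh ξ / cosh ξ ^ 3) _ ξ :=
    ((hasDerivAt_sinh ξ).const_mul (-2)).div ((hasDerivAt_cosh ξ).pow 3) (pow_ne_zero 3 hc)
  rw [h.deriv]
  field_simp
  linear_combination (-6 * cosh ξ ^ 2) * cosh_sq_sub_sinh_sq ξ

theorem deriv_deriv_deriv_sech_sq (ξ : ℝ) :
    deriv (deriv (deriv fun ξ => (1 / cosh ξ) ^ 2)) ξ =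
      (4 - 12 * (1 / cosh ξ) ^ 2) * deriv (fun ξ => (1 / cosh ξ) ^ 2) ξ := by
  have h := hasDerivAt_sech_sq ξ
  rw [deriv_deriv_sech_sq, h.deriv,
    HasDerivAt.deriv (f := fun ξ => 4 * (1 / cosh ξ) ^ 2 - 6 * ((1 / cosh ξ) ^ 2) ^ 2)
      ((h.const_mul 4).sub ((h.pow 2).const_mul 6))]
  ring

theorem ew_sech_pde_solution_general
    (α p q ν ε : ℝ) (hα : α ∈ Set.Ioc (0 : ℝ) 1)
    (hp : p ≠ 0) (hq : q < 0) (hε : ε = 1 ∨ ε = -1)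
    (a A : ℝ)
    (ha : a = ε * Real.sqrt (-1 / (4 * q)))
    (hA : A = -12 * ν * q * a / p) :
    ∀ x t : ℝ, 0 < t →
      t ^ (1 - α) *
        deriv (fun τ : ℝ => A * (1 / Real.cosh (a * x - ν / α * τ ^ α)) ^ 2) t
      + p * (A * (1 / Real.cosh (a * x - ν / α * t ^ α)) ^ 2)
          * deriv (fun y : ℝ => A * (1 / Real.cosh (a * y - ν / α * t ^ α)) ^ 2) x
      + q * t ^ (1 - α) *
          deriv (fun τ : ℝ =>
            deriv (deriv
              (fun y : ℝ => A * (1 / Real.cosh (a * y - ν / α * τ ^ α)) ^ 2)) x) t = 0 := by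
  intro x t ht
  have h4qa : 4 * q * a ^ 2 = -1 := by
    have hε2 : ε ^ 2 = 1 := by rcases hε with rfl | rfl <;> norm_num
    rw [ha, mul_pow, hε2, sq_sqrt (div_nonneg_of_nonpos (by norm_num) (by linarith))]
    field_simp [hq.ne]
  have hpaA : p * a * A = 3 * ν := by
    rw [hA]
    field_simp
    linear_combination (-3 * ν) * h4qa
  have hg₂ : Differentiable ℝ (deriv (deriv fun ξ => A * (1 / cosh ξ) ^ 2)) := by
    simp only [deriv_const_mul_field', deriv_deriv_sech_sq]
    fun_prop (disch := exact fun ξ => (cosh_pos ξ).ne')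
  rw [ew_travelingWave_eq (fun ξ => A * (1 / cosh ξ) ^ 2) hα.1.ne' ht p q a ν x
    ((differentiable_sech_sq _).const_mul A) (hg₂ _)]
  simp only [deriv_const_mul_field', deriv_deriv_deriv_sech_sq]
  set φ := (1 / cosh (a * x - ν / α * t ^ α)) ^ 2
  set φ' := deriv (fun ξ => (1 / cosh ξ) ^ 2) (a * x - ν / α * t ^ α)
  linear_combination (-ν * A * φ' + 3 * ν * A * φ' * φ) * h4qa + A * φ' * φ * hpaA

/-- The sech²-type traveling wave solutions of the conformable time fractional EW
equation `t^(1-α) u_t + p u u_x + q t^(1-α) ∂_t (u_xx) = 0`. -/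
theorem ew_sech_pde_solution
    (α p q ν ε : ℝ) (hα : α ∈ Set.Ioc (0 : ℝ) 1)
    (hp : p ≠ 0) (hν : ν ≠ 0) (hq : q < 0) (hε : ε = 1 ∨ ε = -1)
    (a A : ℝ)
    (ha : a = ε * Real.sqrt (-1 / (4 * q)))
    (hA : A = -12 * ν * q * a / p) :
    ∀ x t : ℝ, 0 < t →
      t ^ (1 - α) *
        deriv (fun τ : ℝ => A * (1 / Real.cosh (a * x - ν / α * τ ^ α)) ^ 2) t
      + p * (A * (1 / Real.cosh (a * x - ν / α * t ^ α)) ^ 2)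
          * deriv (fun y : ℝ => A * (1 / Real.cosh (a * y - ν / α * t ^ α)) ^ 2) x
      + q * t ^ (1 - α) *
          deriv (fun τ : ℝ =>
            deriv (deriv
              (fun y : ℝ => A * (1 / Real.cosh (a * y - ν / α * τ ^ α)) ^ 2)) x) t = 0 :=
  ew_sech_pde_solution_general α p q ν ε hα hp hq hε a A ha hA
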